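/- Consider the n-player normalised total effort game (n ≥ 3) with β_1 < … < β_n in a 2-value equilibrium where player 1 contributes x_1 = β_1 − (n−1)·x_eq and players 2,…,n each contribute x_eq, with β_1/n < x_eq < β_1/(n−1). Then: (i) if player 1 is removed, the profile in which players 2,…,n each contribute x_eq is still a Nash equilibrium of the (n−1)-player game; (ii) if instead some player k ≥ 2 is removed, player 1's best-response value in the remaining (n−1)-player profile equals x_eq and hence differs from x_1. -/

import Mathlib

/-- Utility of player `i` in the normalised total effort game:
`u_i = v_i · log((∑ x_j)/(max_j x_j)) − c_i · x_i` when the maximum contribution is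
positive, and `0` when all contributions are zero. -/
noncomputable def util {n : ℕ} (v c : Fin n → ℝ) (i : Fin n) (x : Fin n → ℝ) : ℝ :=
  if 0 < ⨆ j, x j then v i * Real.log ((∑ j, x j) / (⨆ j, x j)) - c i * x i else 0

/-- A profile is a Nash equilibrium if no player can strictly increase their own utility
by unilaterally changing their contribution (to any non-negative value). -/
def IsNash {n : ℕ} (v c : Fin n → ℝ) (x : Fin n → ℝ) : Prop :=
  ∀ i : Fin n, ∀ y : ℝ, 0 ≤ y →
    util v c i (Function.update x i y) ≤ util v c i x

/-- Maximum of the contributions of the players other than `j`. -/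
noncomputable def othersMax {m : ℕ} (y : Fin m → ℝ) (j : Fin m) : ℝ :=
  ⨆ i : {i : Fin m // i ≠ j}, y i.val

/-- Sum of the contributions of the players other than `j`. -/
noncomputable def othersSum {m : ℕ} (y : Fin m → ℝ) (j : Fin m) : ℝ :=
  ∑ i ∈ Finset.univ.erase j, y i

/-- Best-response value of a player with benefit-cost ratio `β` against the profile `y`:
`max(0, min(M, β − S))` where `M` and `S` are the maximum and the sum of the other
players' contributions. -/
noncomputable def bestResp {m : ℕ} (β : ℝ) (y : Fin m → ℝ) (j : Fin m) : ℝ :=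
  max 0 (min (othersMax y j) (β - othersSum y j))

lemma fin_ciSup_update {m : ℕ} (hm : 2 ≤ m) (a y : ℝ) (i : Fin m) :
    (⨆ j, Function.update (fun _ : Fin m => a) i y j) = max y a := by
  haveI : NeZero m := ⟨by omega⟩
  haveI : Nontrivial (Fin m) := Fin.nontrivial_iff_two_le.mpr hm
  apply le_antisymm
  · apply ciSup_le
    intro j
    rcases eq_or_ne j i with h | h
    · subst h; simp
    · simp [Function.update_of_ne h]
  · apply max_le
    · have := le_ciSup (Finite.bddAbove_range (Function.update (fun _ : Fin m => a) i y)) i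
      simpa using this
    · obtain ⟨j, hj⟩ := exists_ne i
      have := le_ciSup (Finite.bddAbove_range (Function.update (fun _ : Fin m => a) i y)) j
      simpa [Function.update_of_ne hj] using this

set_option maxHeartbeats 1000000 in
/-- Player removal from a 2-value equilibrium: in the `(m+1)`-player NTEG (`m+1 ≥ 3`)
with `β₁ < … < β_{m+1}`, player 1 (index `0`) contributes `x₁ = β₁ − m·x_eq` and the
other `m` players contribute `x_eq`, with `β₁/(m+1) < x_eq < β₁/m`. Then:
(i) if player 1 is removed, the remaining profile (everyone contributing `x_eq`)
is still a Nash equilibrium of the `m`-player game;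
(ii) if instead some player `k ≠ 0` is removed, player 1's best-response value in the
remaining `m`-player profile equals `x_eq`, which differs from `x₁`. -/
theorem player_removal_two_value (m : ℕ) (hm : 2 ≤ m) (v c : Fin (m + 1) → ℝ)
    (hv : ∀ i, 0 < v i) (hc : ∀ i, 0 < c i)
    (hβ : StrictMono (fun i : Fin (m + 1) => v i / c i))
    (xeq : ℝ)
    (h1 : (v 0 / c 0) / ((m : ℝ) + 1) < xeq)
    (h2 : xeq < (v 0 / c 0) / (m : ℝ)) :
    ∀ x₁ : ℝ, x₁ = v 0 / c 0 - (m : ℝ) * xeq →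
      ∀ xx : Fin (m + 1) → ℝ, xx = (fun j => if j = 0 then x₁ else xeq) →
        (IsNash (v ∘ (0 : Fin (m + 1)).succAbove) (c ∘ (0 : Fin (m + 1)).succAbove)
            (xx ∘ (0 : Fin (m + 1)).succAbove) ∧
          ∀ k : Fin (m + 1), k ≠ 0 →
            bestResp (v 0 / c 0) (xx ∘ k.succAbove) ⟨0, by omega⟩ = xeq ∧ xeq ≠ x₁) := by
  haveI : NeZero m := ⟨by omega⟩
  haveI : Nontrivial (Fin m) := Fin.nontrivial_iff_two_le.mpr hm
  intro x₁ hx₁ xx hxx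
  have hmR : (0 : ℝ) < (m : ℝ) := by positivity
  have hβ0 : 0 < v 0 / c 0 := div_pos (hv 0) (hc 0)
  have hxeq : 0 < xeq := lt_trans (by positivity) h1
  have hmx : (m : ℝ) * xeq < v 0 / c 0 := by
    rw [lt_div_iff₀ hmR] at h2; linarith [h2]
  have hx1pos : 0 < x₁ := by rw [hx₁]; linarith
  have hx1lt : x₁ < xeq := by
    rw [div_lt_iff₀ (by positivity : (0:ℝ) < (m:ℝ) + 1)] at h1
    rw [hx₁]; nlinarith
  constructor
  · -- Part (i): Nash equilibrium of remaining game
    have hg : xx ∘ (0 : Fin (m + 1)).succAbove = fun _ : Fin m => xeq := by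
      funext i
      simp only [Function.comp_apply, Fin.succAbove_zero, hxx]
      rw [if_neg (Fin.succ_ne_zero i)]
    rw [hg]
    intro i y hy
    set v' := (v ∘ (0 : Fin (m + 1)).succAbove) i with hv'def
    set c' := (c ∘ (0 : Fin (m + 1)).succAbove) i with hc'def
    have hv' : 0 < v' := hv _
    have hc' : 0 < c' := hc _
    have hβ' : v 0 / c 0 < v' / c' := by
      have := hβ (Fin.succ_pos i)
      simpa [Fin.succAbove_zero, hv'def, hc'def] using this
    -- key facts
    have hvT : c' * ((m : ℝ) * xeq) < v' := by
      have h3 : (v 0 / c 0) * c' < v' := by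
        calc (v 0 / c 0) * c' < (v' / c') * c' := mul_lt_mul_of_pos_right hβ' hc'
        _ = v' := by field_simp
      nlinarith
    -- sup and sum of the const profile
    have hsup : (⨆ j, (fun _ : Fin m => xeq) j) = xeq := ciSup_const
    have hsum : (∑ j : Fin m, (fun _ : Fin m => xeq) j) = (m : ℝ) * xeq := by
      simp [Finset.sum_const, Finset.card_univ]
    -- sup and sum of updated profile
    have hsupu : (⨆ j, Function.update (fun _ : Fin m => xeq) i y j) = max y xeq :=
      fin_ciSup_update hm xeq y i
    have hsumu : (∑ j, Function.update (fun _ : Fin m => xeq) i y j)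
        = y + ((m : ℝ) - 1) * xeq := by
      rw [Finset.sum_update_of_mem (Finset.mem_univ i)]
      simp only [Finset.sum_const, Finset.sdiff_singleton_eq_erase,
        Finset.card_erase_of_mem (Finset.mem_univ i),
        Finset.card_univ, Fintype.card_fin, nsmul_eq_mul]
      rw [Nat.cast_sub (by omega)]
      push_cast
      ring
    have hSpos : 0 < ((m : ℝ) - 1) * xeq := by
      have : (1 : ℝ) ≤ (m : ℝ) - 1 := by
        have : (2 : ℝ) ≤ (m : ℝ) := by exact_mod_cast hm
        linarith
      nlinarith
    have hApos : 0 < y + ((m : ℝ) - 1) * xeq := by linarith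
    rw [util, util, hsup, hsum, hsupu, hsumu, if_pos hxeq]
    rw [if_pos (lt_of_lt_of_le hxeq (le_max_right y xeq))]
    simp only [Function.update_self]
    rcases le_or_gt y xeq with hyx | hyx
    · -- y ≤ xeq : sup is xeq
      rw [max_eq_right hyx]
      set A := y + ((m : ℝ) - 1) * xeq with hA
      set T := (m : ℝ) * xeq with hT
      have hTpos : 0 < T := by positivity
      have hlogkey : Real.log (A / xeq) - Real.log (T / xeq) ≤ (y - xeq) / T := by
        rw [Real.log_div hApos.ne' hxeq.ne', Real.log_div hTpos.ne' hxeq.ne']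
        have h4 := Real.log_le_sub_one_of_pos (show 0 < A / T by positivity)
        rw [Real.log_div hApos.ne' hTpos.ne'] at h4
        have h5 : A / T - 1 = (y - xeq) / T := by
          field_simp
          ring
        linarith
      -- multiply by v' and compare
      have key1 : v' * (Real.log (A / xeq) - Real.log (T / xeq)) ≤ v' * ((y - xeq) / T) :=
        mul_le_mul_of_nonneg_left hlogkey hv'.le
      have key2 : v' * ((y - xeq) / T) ≤ c' * (y - xeq) := by
        rw [← mul_div_assoc, div_le_iff₀ hTpos]
        nlinarith [mul_nonneg (sub_nonneg.2 hyx) (sub_nonneg.2 hvT.le)]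
      nlinarith [key1.trans key2]
    · -- xeq < y : sup is y
      rw [max_eq_left hyx.le]
      have hypos : 0 < y := lt_trans hxeq hyx
      have hTx : (m : ℝ) * xeq / xeq = (m : ℝ) := by field_simp
      have hAy : (y + ((m : ℝ) - 1) * xeq) / y ≤ (m : ℝ) * xeq / xeq := by
        rw [hTx, div_le_iff₀ hypos]
        have hm2 : (2 : ℝ) ≤ (m : ℝ) := by exact_mod_cast hm
        nlinarith [mul_le_mul_of_nonneg_left hyx.le (by linarith : (0:ℝ) ≤ (m : ℝ) - 1)]
      have hlog : Real.log ((y + ((m : ℝ) - 1) * xeq) / y)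
          ≤ Real.log ((m : ℝ) * xeq / xeq) :=
        Real.log_le_log (by positivity) hAy
      have hmul := mul_le_mul_of_nonneg_left hlog hv'.le
      have hcy : c' * xeq < c' * y := mul_lt_mul_of_pos_left hyx hc'
      linarith
  · -- Part (ii)
    intro k hk
    set y := xx ∘ k.succAbove with hydef
    set z : Fin m := ⟨0, by omega⟩ with hz
    have hy0 : y z = x₁ := by
      have h6 : k.succAbove z = 0 := by
        rw [Fin.succAbove_of_castSucc_lt]
        · rfl
        · exact lt_of_le_of_lt (Fin.zero_le _) (Fin.pos_of_ne_zero hk)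
      simp [hydef, h6, hxx]
    have hyj : ∀ j : Fin m, j ≠ z → y j = xeq := by
      intro j hj
      have hj0 : j ≠ 0 := by
        intro h; apply hj; rw [h]; rfl
      have h7 : k.succAbove j ≠ 0 := by
        rcases lt_or_ge j.castSucc k with hlt | hle
        · rw [Fin.succAbove_of_castSucc_lt _ _ hlt]
          have hj0' : (j : ℕ) ≠ 0 := by intro h; exact hj0 (Fin.ext (by rw [h]; simp))
          exact fun h => hj0' (by simpa using congrArg Fin.val h)
        · rw [Fin.succAbove_of_le_castSucc _ _ hle]
          exact Fin.succ_ne_zero j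
      simp [hydef, hxx, if_neg h7]
    have homax : othersMax y z = xeq := by
      haveI : Nonempty {i : Fin m // i ≠ z} :=
        ⟨⟨⟨1, by omega⟩, by simp [hz, Fin.ext_iff]⟩⟩
      unfold othersMax
      have : (fun i : {i : Fin m // i ≠ z} => y i.val) = fun _ => xeq :=
        funext fun i => hyj i.1 i.2
      rw [this]
      exact ciSup_const
    have hosum : othersSum y z = ((m : ℝ) - 1) * xeq := by
      unfold othersSum
      rw [Finset.sum_congr rfl (fun j hj => hyj j (Finset.ne_of_mem_erase hj))]
      simp only [Finset.sum_const, Finset.card_erase_of_mem (Finset.mem_univ z),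
        Finset.card_univ, Fintype.card_fin, nsmul_eq_mul]
      rw [Nat.cast_sub (by omega)]
      push_cast
      ring
    refine ⟨?_, by linarith⟩
    rw [bestResp, homax, hosum]
    have hge : xeq ≤ v 0 / c 0 - ((m : ℝ) - 1) * xeq := by
      have : x₁ = v 0 / c 0 - (m : ℝ) * xeq := hx₁
      nlinarith
    rw [min_eq_left hge, max_eq_right hxeq.le]
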